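/- arXiv:2306.15415 — 2 statements merged into one kernel-verified Lean document; each statement's English description precedes it below -/
import Mathlib

section
/- The product of the phase gate diag(1,1,−ω^k,−ω^k) (a phase gate [[1,0],[0,−ω^k]] on the first qubit) followed by RBS(−π/4), when restricted to the unary subspace spanned by {|01⟩,|10⟩}, equals the scaled radix-2 butterfly matrix (1/√2)·[[1, ω^k],[1, −ω^k]]. -/
open Matrix

/-- The RBS gate as a complex 4×4 matrix. -/
noncomputable def RBSC (θ : ℝ) : Matrix (Fin 4) (Fin 4) ℂ :=
  !![1, 0, 0, 0;
     0, (Real.cos θ : ℂ), (Real.sin θ : ℂ), 0;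
     0, -(Real.sin θ : ℂ), (Real.cos θ : ℂ), 0;
     0, 0, 0, 1]

/-- Phase gate [[1,0],[0,−w]] on the first qubit of two qubits: diag(1, 1, −w, −w). -/
noncomputable def phaseGate (w : ℂ) : Matrix (Fin 4) (Fin 4) ℂ :=
  !![1, 0, 0, 0;
     0, 1, 0, 0;
     0, 0, -w, 0;
     0, 0, 0, -w]

/-- Restriction of a 4×4 matrix to the unary subspace span{|01⟩,|10⟩}
(the middle two rows and columns). -/
def unaryBlock (M : Matrix (Fin 4) (Fin 4) ℂ) : Matrix (Fin 2) (Fin 2) ℂ :=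
  !![M 1 1, M 1 2;
     M 2 1, M 2 2]

/-! Both gates preserve the unary subspace span{|01⟩, |10⟩}, so the restriction of their
product is the product of the restrictions: the rotation (1/√2)·[[1, −1], [1, 1]] by −π/4
times diag(1, −ω^k). -/

theorem unaryBlock_mul {A : Matrix (Fin 4) (Fin 4) ℂ} (B : Matrix (Fin 4) (Fin 4) ℂ)
    (h10 : A 1 0 = 0) (h13 : A 1 3 = 0) (h20 : A 2 0 = 0) (h23 : A 2 3 = 0) :
    unaryBlock (A * B) = unaryBlock A * unaryBlock B := by
  ext i j
  fin_cases i <;> fin_cases j <;>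
    simp [unaryBlock, Matrix.mul_apply, Fin.sum_univ_four, Fin.sum_univ_two, h10, h13, h20, h23]

theorem unaryBlock_RBSC (θ : ℝ) :
    unaryBlock (RBSC θ) =
      !![(Real.cos θ : ℂ), (Real.sin θ : ℂ); -(Real.sin θ : ℂ), (Real.cos θ : ℂ)] := by
  simp [unaryBlock, RBSC]

theorem unaryBlock_phaseGate (w : ℂ) : unaryBlock (phaseGate w) = !![1, 0; 0, -w] := by
  simp [unaryBlock, phaseGate]

theorem unaryBlock_RBSC_neg_pi_div_four :
    unaryBlock (RBSC (-(Real.pi / 4))) = (Real.sqrt 2 : ℂ)⁻¹ • !![1, -1; 1, 1] := by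
  have hcos : Real.cos (Real.pi / 4) = (Real.sqrt 2)⁻¹ := by
    rw [Real.cos_pi_div_four, Real.sqrt_div_self]
  have hsin : Real.sin (Real.pi / 4) = (Real.sqrt 2)⁻¹ := by
    rw [Real.sin_pi_div_four, Real.sqrt_div_self]
  rw [unaryBlock_RBSC, Real.cos_neg, Real.sin_neg, hcos, hsin]
  ext i j
  fin_cases i <;> fin_cases j <;> simp

theorem unaryBlock_RBSC_neg_pi_div_four_mul_phaseGate (w : ℂ) :
    unaryBlock (RBSC (-(Real.pi / 4)) * phaseGate w) =
      (Real.sqrt 2 : ℂ)⁻¹ • !![1, w; 1, -w] := by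
  rw [unaryBlock_mul _ (by simp [RBSC]) (by simp [RBSC]) (by simp [RBSC]) (by simp [RBSC]),
    unaryBlock_RBSC_neg_pi_div_four, unaryBlock_phaseGate, smul_mul, Matrix.mul_fin_two]
  simp

theorem radix2_butterfly_general (n : ℕ) (k : ℕ) :
    unaryBlock (RBSC (-(Real.pi / 4)) * phaseGate ((Complex.exp (2 * Real.pi * Complex.I / n)) ^ k)) =
      ((Real.sqrt 2 : ℂ))⁻¹ •
        !![1, (Complex.exp (2 * Real.pi * Complex.I / n)) ^ k;
           1, -((Complex.exp (2 * Real.pi * Complex.I / n)) ^ k)] :=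
  unaryBlock_RBSC_neg_pi_div_four_mul_phaseGate _

/-- The phase gate diag(1,1,−ω^k,−ω^k) followed by RBS(−π/4), restricted to the unary
subspace, equals the scaled radix-2 butterfly (1/√2)·[[1, ω^k],[1, −ω^k]],
where ω = e^{2πi/n}. -/
theorem radix2_butterfly (n : ℕ) (hn : 0 < n) (k : ℕ) :
    unaryBlock (RBSC (-(Real.pi / 4)) * phaseGate ((Complex.exp (2 * Real.pi * Complex.I / n)) ^ k)) =
      ((Real.sqrt 2 : ℂ))⁻¹ •
        !![1, (Complex.exp (2 * Real.pi * Complex.I / n)) ^ k;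
           1, -((Complex.exp (2 * Real.pi * Complex.I / n)) ^ k)] :=
  radix2_butterfly_general n k
end

section
/- Suppose P(θ) is a product of RBS gates P(θ) = G_M(θ_M)···G_1(θ_1) on n qubits, and U_Z is a tensor product of Z gates applied to a set S of qubits such that every RBS gate G_m acts on exactly one qubit in S. Then U_Z · P(θ) = P(−θ) · U_Z, where P(−θ) denotes the same circuit with all angles negated. -/
open Matrix Finset

noncomputable def RBS (θ : ℝ) : Matrix (Fin 4) (Fin 4) ℝ :=
  !![1, 0, 0, 0;
     0, Real.cos θ, Real.sin θ, 0;
     0, -Real.sin θ, Real.cos θ, 0;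
     0, 0, 0, 1]

def pairIdx (a b : Fin 2) : Fin 4 := ⟨2 * a.val + b.val, by omega⟩

/-- The RBS(θ) gate applied to qubits p and q of an n-qubit register (identity elsewhere). -/
noncomputable def rbsGate (n : ℕ) (p q : Fin n) (θ : ℝ) :
    Matrix (Fin n → Fin 2) (Fin n → Fin 2) ℝ :=
  fun x y =>
    if ∀ i, i ≠ p → i ≠ q → x i = y i then
      RBS θ (pairIdx (x p) (x q)) (pairIdx (y p) (y q))
    else 0

/-- A circuit given by a list of gates, each an RBS gate on a pair of qubits with an angle.
The list is ordered so that `circuit L = G_M(θ_M) ⋯ G_1(θ_1)` with `L = [(g_M), …, (g_1)]`. -/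
noncomputable def circuit (n : ℕ) (L : List ((Fin n × Fin n) × ℝ)) :
    Matrix (Fin n → Fin 2) (Fin n → Fin 2) ℝ :=
  (L.map (fun g => rbsGate n g.1.1 g.1.2 g.2)).prod

/-- U_Z: a Z gate applied to each qubit in S. -/
noncomputable def uZ (n : ℕ) (S : Finset (Fin n)) :
    Matrix (Fin n → Fin 2) (Fin n → Fin 2) ℝ :=
  Matrix.diagonal (fun x => ∏ i ∈ S, if x i = 1 then (-1 : ℝ) else 1)

/-!
Z on one leg of RBS(θ) conjugates it to RBS(−θ), and swapping the two legs of RBS(θ) also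
gives RBS(−θ), so it does not matter which leg of a gate lies in `S`. On the register, `U_Z`
factors as the Z sign of the leg in `S` times signs of qubits the gate does not touch, so
`U_Z G(θ) = G(−θ) U_Z` for every gate; the circuit identity follows gate by gate.
-/

theorem SemiconjBy.list_prod_map {M ι : Type*} [Monoid M] {a : M} {f g : ι → M}
    {L : List ι} (h : ∀ i ∈ L, SemiconjBy a (f i) (g i)) :
    SemiconjBy a (L.map f).prod (L.map g).prod := by
  induction L with
  | nil => exact SemiconjBy.one_right a
  | cons i L ih =>
    simpa using (h i List.mem_cons_self).mul_right (ih fun j hj => h j (List.mem_cons_of_mem i hj))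

def zSign (b : Fin 2) : ℝ := if b = 1 then -1 else 1

theorem zSign_mul_RBS (θ : ℝ) (a b c d : Fin 2) :
    zSign a * RBS θ (pairIdx a b) (pairIdx c d) =
      RBS (-θ) (pairIdx a b) (pairIdx c d) * zSign c := by
  fin_cases a <;> fin_cases b <;> fin_cases c <;> fin_cases d <;>
    simp [zSign, RBS, pairIdx]

theorem RBS_pairIdx_swap (θ : ℝ) (a b c d : Fin 2) :
    RBS θ (pairIdx b a) (pairIdx d c) = RBS (-θ) (pairIdx a b) (pairIdx c d) := by
  fin_cases a <;> fin_cases b <;> fin_cases c <;> fin_cases d <;>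
    simp [RBS, pairIdx]

theorem rbsGate_swap (n : ℕ) (p q : Fin n) (θ : ℝ) :
    rbsGate n q p θ = rbsGate n p q (-θ) := by
  ext x y
  simp only [rbsGate]
  rw [RBS_pairIdx_swap]
  congr 1
  exact propext (forall_congr' fun _ => imp.swap)

theorem uZ_mul_rbsGate_of_mem_of_not_mem {n : ℕ} {p q : Fin n} {S : Finset (Fin n)} (θ : ℝ)
    (hp : p ∈ S) (hq : q ∉ S) : uZ n S * rbsGate n p q θ = rbsGate n p q (-θ) * uZ n S := by
  ext x y
  rw [uZ, diagonal_mul, mul_diagonal, rbsGate, rbsGate]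
  split_ifs with hxy
  · have hrest : ∏ i ∈ S.erase p, zSign (x i) = ∏ i ∈ S.erase p, zSign (y i) :=
      prod_congr rfl fun i hi =>
        congrArg zSign (hxy i (ne_of_mem_erase hi) (ne_of_mem_of_not_mem (mem_of_mem_erase hi) hq))
    change (∏ i ∈ S, zSign (x i)) * _ = _ * ∏ i ∈ S, zSign (y i)
    rw [← mul_prod_erase S _ hp, ← mul_prod_erase S _ hp, hrest]
    linear_combination (∏ i ∈ S.erase p, zSign (y i)) * zSign_mul_RBS θ (x p) (x q) (y p) (y q)
  · simp

theorem uZ_mul_rbsGate {n : ℕ} {p q : Fin n} {S : Finset (Fin n)} (θ : ℝ)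
    (h : Xor' (p ∈ S) (q ∈ S)) :
    uZ n S * rbsGate n p q θ = rbsGate n p q (-θ) * uZ n S := by
  rcases h with ⟨hp, hq⟩ | ⟨hq, hp⟩
  · exact uZ_mul_rbsGate_of_mem_of_not_mem θ hp hq
  · rw [rbsGate_swap n q p θ, rbsGate_swap n q p (-θ)]
    simpa only [neg_neg] using uZ_mul_rbsGate_of_mem_of_not_mem (-θ) hq hp

/-- If every RBS gate of the circuit P(θ) acts on exactly one qubit of S, then
U_Z · P(θ) = P(−θ) · U_Z, where P(−θ) is the same circuit with all angles negated. -/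
theorem uZ_comm_circuit (n : ℕ) (L : List ((Fin n × Fin n) × ℝ)) (S : Finset (Fin n))
    (hS : ∀ g ∈ L, Xor' (g.1.1 ∈ S) (g.1.2 ∈ S)) :
    uZ n S * circuit n L = circuit n (L.map (fun g => (g.1, -g.2))) * uZ n S := by
  rw [circuit, circuit, List.map_map]
  exact SemiconjBy.list_prod_map fun g hg => uZ_mul_rbsGate g.2 (hS g hg)
end
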